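/- arXiv:1512.07499 — 2 statements merged into one kernel-verified Lean document; each statement's English description precedes it below -/
import Mathlib

section
/- Let F : ℂ³ → ℂ² be the polynomial map F(x,y,z) = (x, [(x−1)(xz+y²)+1]·[x(xz+y²)−1]). There is ε > 0 such that for every (a,b) ∈ ℂ² with 0 < |a| < ε and |b| < ε, the quadratic equation a(a−1)λ² + λ − (1+b) = 0 has two distinct roots c₁ ≠ c₂, and F^{-1}(a,b) = {(a,y,z) ∈ ℂ³ : az + y² = c₁} ∪ {(a,y,z) ∈ ℂ³ : az + y² = c₂}. Consequently F^{-1}(a,b) has exactly two connected components, and each of them is biholomorphic (in particular diffeomorphic, via y ↦ (a, y, (c_i − y²)/a)) to ℂ. -/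
open Filter Set Topology

noncomputable section

/-- The singular chain complex of a topological space, with `ℚ` coefficients:
the alternating face map complex of the free simplicial `ℚ`-module on the
singular simplicial set. -/
def singularChainComplex (X : Type) [TopologicalSpace X] : ChainComplex (ModuleCat ℚ) ℕ :=
  (AlgebraicTopology.alternatingFaceMapComplex (ModuleCat ℚ)).obj
    (((CategoryTheory.SimplicialObject.whiskering (Type) (ModuleCat ℚ)).obj
      (ModuleCat.free ℚ)).obj (TopCat.toSSet.obj (TopCat.of X)))

/-- Singular homology of a topological space with `ℚ` coefficients. -/
def singularHomology (X : Type) [TopologicalSpace X] (i : ℕ) : ModuleCat ℚ :=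
  (singularChainComplex X).homology i

/-- The `i`-th Betti number: the dimension over `ℚ` of the `i`-th singular
homology with `ℚ` coefficients. -/
def bettiNumber (X : Type) [TopologicalSpace X] (i : ℕ) : ℕ :=
  Module.finrank ℚ (singularHomology X i)

/-- The `i`-th Betti number is finite. -/
def FiniteBetti (X : Type) [TopologicalSpace X] (i : ℕ) : Prop :=
  FiniteDimensional ℚ (singularHomology X i)

/-- `Φ` and `Ψ` give mutually inverse smooth maps between `S ⊆ E` and `T ⊆ F`,
i.e. a diffeomorphism between `S` and `T` (smoothness of a map on a subset is
expressed via `ContDiffOn`). -/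
def IsDiffeoOn {E F : Type} [NormedAddCommGroup E] [NormedSpace ℝ E]
    [NormedAddCommGroup F] [NormedSpace ℝ F]
    (Φ : E → F) (Ψ : F → E) (S : Set E) (T : Set F) : Prop :=
  ContDiffOn ℝ ⊤ Φ S ∧ ContDiffOn ℝ ⊤ Ψ T ∧ Set.MapsTo Φ S T ∧ Set.MapsTo Ψ T S ∧
    Set.LeftInvOn Ψ Φ S ∧ Set.RightInvOn Ψ Φ T

/-- `S` and `T` are diffeomorphic. -/
def DiffeoEquiv {E F : Type} [NormedAddCommGroup E] [NormedSpace ℝ E]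
    [NormedAddCommGroup F] [NormedSpace ℝ F] (S : Set E) (T : Set F) : Prop :=
  ∃ Φ Ψ, IsDiffeoOn Φ Ψ S T

/-- The restriction of `p` to `M` is a trivial smooth fibration over `D` with fibre
`p⁻¹(lam) ∩ M`: there is a diffeomorphism `Φ : M ∩ p⁻¹(D) → D × (M ∩ p⁻¹(lam))`
with `pr₁ ∘ Φ = p`. -/
def IsSmoothTrivialFibrationOn {E F : Type} [NormedAddCommGroup E] [NormedSpace ℝ E]
    [NormedAddCommGroup F] [NormedSpace ℝ F]
    (p : E → F) (M : Set E) (D : Set F) (lam : F) : Prop :=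
  ∃ Φ : E → F × E, ∃ Ψ : F × E → E,
    IsDiffeoOn Φ Ψ (M ∩ p ⁻¹' D) (D ×ˢ (M ∩ p ⁻¹' {lam})) ∧
    ∀ x ∈ M ∩ p ⁻¹' D, (Φ x).1 = p x

/-- `lam` is not a bifurcation value of `p : M → B`. -/
def IsNotBifurcationValueOn {E F : Type} [NormedAddCommGroup E] [NormedSpace ℝ E]
    [NormedAddCommGroup F] [NormedSpace ℝ F]
    (p : E → F) (M : Set E) (B : Set F) (lam : F) : Prop :=
  ∃ D : Set F, IsOpen D ∧ lam ∈ D ∧ D ⊆ B ∧ IsSmoothTrivialFibrationOn p M D lam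

/-- `g : V → ℂᵏ` is a holomorphic local defining function for `M` at `x`, with
surjective derivative at every point of its zero set. -/
def IsLocalDefiningFunction {E : Type} [NormedAddCommGroup E] [NormedSpace ℂ E]
    (k : ℕ) (M : Set E) (x : E) (V : Set E) (g : E → (Fin k → ℂ)) : Prop :=
  IsOpen V ∧ x ∈ V ∧ DifferentiableOn ℂ g V ∧
    (∀ y ∈ V, g y = 0 → Function.Surjective (fderiv ℂ g y)) ∧
    M ∩ V = {y ∈ V | g y = 0}

/-- `M ⊆ ℂᴺ` is a (Stein) closed complex submanifold of complex dimension `m`: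
it is closed and near each of its points it is the zero set of a holomorphic
submersion to `ℂ^{N-m}`. -/
def IsSteinSubmanifold (N m : ℕ) (M : Set (Fin N → ℂ)) : Prop :=
  IsClosed M ∧ ∀ x ∈ M, ∃ V g, IsLocalDefiningFunction (N - m) M x V g

/-- A holomorphic map `p` (defined near `M`) is a submersion at `x ∈ M`: its
derivative maps the tangent space `T_x M = ker (d_x g)` onto the target, where
`g` is a local defining function of `M` near `x` (of codimension `k`). -/
def SubmersionAt {E F : Type} [NormedAddCommGroup E] [NormedSpace ℂ E]
    [NormedAddCommGroup F] [NormedSpace ℂ F]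
    (k : ℕ) (M : Set E) (p : E → F) (x : E) : Prop :=
  ∃ V g, IsLocalDefiningFunction k M x V g ∧
    Submodule.map (fderiv ℂ p x).toLinearMap
      (LinearMap.ker (fderiv ℂ g x).toLinearMap) = ⊤

/-- A connected component of the fibres of `p : M → B` vanishes at infinity as
`t → lam`: there are `t k → lam` in `B` and connected components
`C k = connectedComponentIn (M ∩ p⁻¹(t k)) (x k)` of the fibres over `t k`
which eventually miss every compact subset. -/
def HasVanishingComponentAtInfinity {E F : Type} [TopologicalSpace E] [TopologicalSpace F]
    (M : Set E) (p : E → F) (B : Set F) (lam : F) : Prop :=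
  ∃ t : ℕ → F, ∃ x : ℕ → E,
    (∀ k, t k ∈ B) ∧ Filter.Tendsto t Filter.atTop (nhds lam) ∧
    (∀ k, x k ∈ M ∩ p ⁻¹' {t k}) ∧
    ∀ K : Set E, IsCompact K →
      ∀ᶠ k in Filter.atTop, connectedComponentIn (M ∩ p ⁻¹' {t k}) (x k) ∩ K = ∅

/-- `Φ` and `Ψ` give mutually inverse continuous maps between `S` and `T`,
i.e. a homeomorphism between `S` and `T`. -/
def IsHomeoOn {E F : Type} [TopologicalSpace E] [TopologicalSpace F]
    (Φ : E → F) (Ψ : F → E) (S : Set E) (T : Set F) : Prop :=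
  ContinuousOn Φ S ∧ ContinuousOn Ψ T ∧ Set.MapsTo Φ S T ∧ Set.MapsTo Ψ T S ∧
    Set.LeftInvOn Ψ Φ S ∧ Set.RightInvOn Ψ Φ T

/-- The Euler characteristic `b₀ - b₁` of the fibre of `p : M → ·` over `t`
(the fibres under consideration are open curves, with no homology in degrees ≥ 2). -/
def eulerCharOn {E F : Type} [TopologicalSpace E] (p : E → F) (M : Set E) (t : F) : ℤ :=
  (bettiNumber ↥(M ∩ p ⁻¹' {t}) 0 : ℤ) - (bettiNumber ↥(M ∩ p ⁻¹' {t}) 1 : ℤ)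

/-!
On the slice `x = a` put `w = a z + y²`. Since `((a - 1) w + 1)(a w - 1) = a (a - 1) w² + w - 1`,
a point lies over `(a, b)` exactly when its `w` is a root of `a (a - 1) λ² + λ - (1 + b)`. For small
`a ≠ 0` and `b` this quadratic is non-degenerate with discriminant `1 + 4 a (a - 1)(1 + b)` close
to `1`, so it has two distinct roots `c₁, c₂` and the fibre is the disjoint union of the level sets
`{w = cᵢ}`. Each level set is the graph of `y ↦ (a, y, (cᵢ - y²)/a)`, hence connected, and the two
are separated by the continuous function `w`, so they are the connected components of the fibre.
-/

theorem exists_ne_roots_of_discrim_ne_zero {K : Type*} [Field K] [IsAlgClosed K] [NeZero (2 : K)]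
    {a b c : K} (ha : a ≠ 0) (hd : discrim a b c ≠ 0) :
    ∃ x₁ x₂ : K, x₁ ≠ x₂ ∧ ∀ x, a * (x * x) + b * x + c = 0 ↔ x = x₁ ∨ x = x₂ := by
  obtain ⟨s, hs⟩ := IsAlgClosed.exists_eq_mul_self (discrim a b c)
  refine ⟨_, _, fun h => hd ?_, quadratic_eq_zero_iff ha hs⟩
  have hs0 : (2 : K) * s = 0 := by
    rw [div_left_inj' (mul_ne_zero two_ne_zero ha)] at h
    linear_combination h
  rw [hs, (mul_eq_zero.1 hs0).resolve_left two_ne_zero, mul_zero]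

theorem connectedComponentIn_union_eq_left {X Y : Type*} [TopologicalSpace X]
    [TopologicalSpace Y] [T2Space Y] {f : X → Y} (hf : Continuous f) {S T : Set X} {y₁ y₂ : Y}
    (hy : y₁ ≠ y₂) (hS₁ : S ⊆ f ⁻¹' {y₁}) (hT₂ : T ⊆ f ⁻¹' {y₂}) (hS : IsPreconnected S)
    {x : X} (hx : x ∈ S) : connectedComponentIn (S ∪ T) x = S := by
  obtain ⟨U, V, hU, hV, hy₁, hy₂, hUV⟩ := t2_separation hy
  have hSU : S ⊆ f ⁻¹' U := hS₁.trans (preimage_mono (singleton_subset_iff.2 hy₁))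
  have hTV : T ⊆ f ⁻¹' V := hT₂.trans (preimage_mono (singleton_subset_iff.2 hy₂))
  have hsub : connectedComponentIn (S ∪ T) x ⊆ f ⁻¹' U :=
    isPreconnected_connectedComponentIn.subset_left_of_subset_union
      (hU.preimage hf) (hV.preimage hf) (hUV.preimage f)
      ((connectedComponentIn_subset _ _).trans (union_subset_union hSU hTV))
      ⟨x, mem_connectedComponentIn (subset_union_left hx), hSU hx⟩
  refine (hS.subset_connectedComponentIn hx subset_union_left).antisymm' fun p hp => ?_
  refine (connectedComponentIn_subset _ _ hp).resolve_right fun hpT => ?_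
  exact hUV.ne_of_mem (hsub hp) (hTV hpT) rfl

theorem mul_sub_one_mul_add_one_eq_iff {R : Type*} [CommRing R] (x w b : R) :
    ((x - 1) * w + 1) * (x * w - 1) = b ↔ x * (x - 1) * w ^ 2 + w - (1 + b) = 0 := by
  rw [← sub_eq_zero]
  constructor <;> intro h <;> linear_combination h

theorem norm_four_mul_lt_one {a b : ℂ} (ha : ‖a‖ < 1 / 8) (hb : ‖b‖ < 1 / 8) :
    ‖4 * (a * (a - 1)) * (1 + b)‖ < 1 := by
  have ha1 : ‖a - 1‖ ≤ ‖a‖ + 1 := by simpa using norm_sub_le a 1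
  have hb1 : ‖1 + b‖ ≤ 1 + ‖b‖ := by simpa using norm_add_le 1 b
  rw [norm_mul, norm_mul, norm_mul, Complex.norm_ofNat]
  calc 4 * (‖a‖ * ‖a - 1‖) * ‖1 + b‖ ≤ 4 * (1 / 8 * (9 / 8)) * (9 / 8) := by gcongr <;> linarith
    _ < 1 := by norm_num

theorem exists_ne_roots_of_norm_lt {a b : ℂ} (ha : a ≠ 0) (haε : ‖a‖ < 1 / 8)
    (hbε : ‖b‖ < 1 / 8) :
    ∃ c₁ c₂ : ℂ, c₁ ≠ c₂ ∧ ∀ c, a * (a - 1) * c ^ 2 + c - (1 + b) = 0 ↔ c = c₁ ∨ c = c₂ := by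
  have ha1 : a - 1 ≠ 0 := fun h => by
    rw [sub_eq_zero.1 h, norm_one] at haε
    norm_num at haε
  have hd : discrim (a * (a - 1)) 1 (-(1 + b)) ≠ 0 := fun h => by
    have h4 : 4 * (a * (a - 1)) * (1 + b) = -1 := by
      rw [discrim] at h
      linear_combination h
    have := norm_four_mul_lt_one haε hbε
    rw [h4, norm_neg, norm_one] at this
    exact lt_irrefl _ this
  obtain ⟨c₁, c₂, hne, hroots⟩ := exists_ne_roots_of_discrim_ne_zero (mul_ne_zero ha ha1) hd
  refine ⟨c₁, c₂, hne, fun c => ?_⟩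
  rw [← hroots c]
  ring_nf

/-- The map `F` of the statement. -/
def exampleMap (q : ℂ × ℂ × ℂ) : ℂ × ℂ :=
  (q.1, ((q.1 - 1) * (q.1 * q.2.2 + q.2.1 ^ 2) + 1) * (q.1 * (q.1 * q.2.2 + q.2.1 ^ 2) - 1))

def levelCurve (a c : ℂ) : Set (ℂ × ℂ × ℂ) :=
  {q | q.1 = a ∧ a * q.2.2 + q.2.1 ^ 2 = c}

def levelCurveParam (a c y : ℂ) : ℂ × ℂ × ℂ :=
  (a, y, (c - y ^ 2) / a)

section LevelCurve

variable {a c : ℂ}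

theorem preimage_exampleMap_eq_union {b c₁ c₂ : ℂ}
    (hroots : ∀ c, a * (a - 1) * c ^ 2 + c - (1 + b) = 0 ↔ c = c₁ ∨ c = c₂) :
    exampleMap ⁻¹' {(a, b)} = levelCurve a c₁ ∪ levelCurve a c₂ := by
  ext ⟨x, y, z⟩
  simp only [exampleMap, levelCurve, mem_preimage, mem_singleton_iff, Prod.mk.injEq,
    mem_union, mem_ofPred_eq, mul_sub_one_mul_add_one_eq_iff]
  constructor
  · rintro ⟨rfl, h⟩
    exact ((hroots _).1 h).imp (⟨rfl, ·⟩) (⟨rfl, ·⟩)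
  · rintro (⟨rfl, h⟩ | ⟨rfl, h⟩)
    · exact ⟨rfl, (hroots _).2 (Or.inl h)⟩
    · exact ⟨rfl, (hroots _).2 (Or.inr h)⟩

theorem disjoint_levelCurve {c' : ℂ} (hc : c ≠ c') :
    Disjoint (levelCurve a c) (levelCurve a c') :=
  disjoint_left.2 fun _ hq hq' => hc (hq.2.symm.trans hq'.2)

theorem differentiable_levelCurveParam : Differentiable ℂ (levelCurveParam a c) := by
  unfold levelCurveParam
  fun_prop

theorem levelCurveParam_injective : Function.Injective (levelCurveParam a c) :=
  Function.LeftInverse.injective (g := fun q => q.2.1) fun _ => rfl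

theorem range_levelCurveParam (ha : a ≠ 0) : range (levelCurveParam a c) = levelCurve a c := by
  ext ⟨x, y, z⟩
  simp only [levelCurveParam, levelCurve, mem_range, mem_ofPred_eq, Prod.mk.injEq]
  constructor
  · rintro ⟨y, rfl, rfl, rfl⟩
    exact ⟨rfl, by field_simp; ring⟩
  · rintro ⟨rfl, h⟩
    exact ⟨y, rfl, rfl, by rw [div_eq_iff ha]; linear_combination -h⟩

theorem connectedComponentIn_levelCurve_union {c' : ℂ} (ha : a ≠ 0) (hc : c ≠ c') {q : ℂ × ℂ × ℂ}
    (hq : q ∈ levelCurve a c) :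
    connectedComponentIn (levelCurve a c ∪ levelCurve a c') q = levelCurve a c := by
  refine connectedComponentIn_union_eq_left (f := fun q => a * q.2.2 + q.2.1 ^ 2) (by fun_prop)
    hc (fun _ hp => hp.2) (fun _ hp => hp.2) ?_ hq
  rw [← range_levelCurveParam ha]
  exact isPreconnected_range differentiable_levelCurveParam.continuous

end LevelCurve

/-- For `F(x,y,z) = (x, [(x−1)(xz+y²)+1]·[x(xz+y²)−1])` and `(a,b)`
with `0 < |a| < ε`, `|b| < ε`, the quadratic `a(a−1)λ² + λ − (1+b) = 0` has two distinct
roots `c₁ ≠ c₂`, the fibre `F⁻¹(a,b)` is the union of the two disjoint sets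
`{az + y² = cᵢ, x = a}`, which are its two connected components, each biholomorphic to
`ℂ` via `y ↦ (a, y, (cᵢ − y²)/a)` with holomorphic inverse the projection to `y`. -/
theorem statement12 (F : ℂ × ℂ × ℂ → ℂ × ℂ)
    (hF : F = fun q => (q.1, ((q.1 - 1) * (q.1 * q.2.2 + q.2.1 ^ 2) + 1) *
      (q.1 * (q.1 * q.2.2 + q.2.1 ^ 2) - 1))) :
    ∃ ε > (0 : ℝ), ∀ a b : ℂ, a ≠ 0 → ‖a‖ < ε → ‖b‖ < ε →
      ∃ c₁ c₂ : ℂ, c₁ ≠ c₂ ∧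
        (∀ c : ℂ, a * (a - 1) * c ^ 2 + c - (1 + b) = 0 ↔ c = c₁ ∨ c = c₂) ∧
        F ⁻¹' {(a, b)} =
          {q : ℂ × ℂ × ℂ | q.1 = a ∧ a * q.2.2 + q.2.1 ^ 2 = c₁} ∪
          {q : ℂ × ℂ × ℂ | q.1 = a ∧ a * q.2.2 + q.2.1 ^ 2 = c₂} ∧
        Disjoint {q : ℂ × ℂ × ℂ | q.1 = a ∧ a * q.2.2 + q.2.1 ^ 2 = c₁}
          {q : ℂ × ℂ × ℂ | q.1 = a ∧ a * q.2.2 + q.2.1 ^ 2 = c₂} ∧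
        ∀ c ∈ ({c₁, c₂} : Set ℂ),
          (∀ q ∈ {q : ℂ × ℂ × ℂ | q.1 = a ∧ a * q.2.2 + q.2.1 ^ 2 = c},
            connectedComponentIn (F ⁻¹' {(a, b)}) q =
              {q : ℂ × ℂ × ℂ | q.1 = a ∧ a * q.2.2 + q.2.1 ^ 2 = c}) ∧
          Differentiable ℂ (fun y : ℂ => ((a, y, (c - y ^ 2) / a) : ℂ × ℂ × ℂ)) ∧
          Function.Injective (fun y : ℂ => ((a, y, (c - y ^ 2) / a) : ℂ × ℂ × ℂ)) ∧
          Set.range (fun y : ℂ => ((a, y, (c - y ^ 2) / a) : ℂ × ℂ × ℂ)) =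
            {q : ℂ × ℂ × ℂ | q.1 = a ∧ a * q.2.2 + q.2.1 ^ 2 = c} ∧
          ∀ y : ℂ, (((a, y, (c - y ^ 2) / a)) : ℂ × ℂ × ℂ).2.1 = y := by
  subst hF
  refine ⟨1 / 8, by norm_num, fun a b ha haε hbε => ?_⟩
  obtain ⟨c₁, c₂, hne, hroots⟩ := exists_ne_roots_of_norm_lt ha haε hbε
  have hfib : exampleMap ⁻¹' {(a, b)} = levelCurve a c₁ ∪ levelCurve a c₂ :=
    preimage_exampleMap_eq_union hroots
  refine ⟨c₁, c₂, hne, hroots, hfib, disjoint_levelCurve hne, fun c hc => ?_⟩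
  have hcomp : ∀ q ∈ levelCurve a c,
      connectedComponentIn (exampleMap ⁻¹' {(a, b)}) q = levelCurve a c := by
    rw [hfib]
    rcases hc with rfl | rfl
    · exact fun q => connectedComponentIn_levelCurve_union ha hne
    · rw [union_comm]
      exact fun q => connectedComponentIn_levelCurve_union ha hne.symm
  exact ⟨hcomp, differentiable_levelCurveParam, levelCurveParam_injective,
    range_levelCurveParam ha, fun _ => rfl⟩

end
end

section
/- Let F : ℂ³ → ℂ² be the polynomial map F(x,y,z) = (x, [(x−1)(xz+y²)+1]·[x(xz+y²)−1]). For every b ∈ ℂ with b ≠ −1, F^{-1}(0,b) = {(0,d,z) ∈ ℂ³ : z ∈ ℂ, d² = 1+b}, which is the union of the two disjoint complex lines {(0,d₁)} × ℂ and {(0,d₂)} × ℂ, where d₁, d₂ are the two distinct square roots of 1+b. In particular F^{-1}(0,b) has exactly two connected components, each biholomorphic to ℂ. -/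
open Filter Set Topology

noncomputable section

/-!
On the plane `x = 0` the second component of `F` collapses to `y² - 1`, so the fibre over
`(0, b)` is the pair of parallel lines `y = ±d` with `d² = 1 + b`. For `b ≠ -1` these are
distinct, the coordinate `y` separates them by disjoint open sets, and each line is connected,
hence each line is a whole connected component of the fibre.
-/

lemma connectedComponentIn_union_eq_of_separatedNhds {X : Type*} [TopologicalSpace X]
    {A B : Set X} (hA : IsPreconnected A) (hAB : SeparatedNhds A B) {x : X} (hx : x ∈ A) :
    connectedComponentIn (A ∪ B) x = A := by
  obtain ⟨U, V, hU, hV, hAU, hBV, hUV⟩ := hAB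
  refine Subset.antisymm (fun y hy => ?_)
    (hA.subset_connectedComponentIn hx subset_union_left)
  have hsubU : connectedComponentIn (A ∪ B) x ⊆ U :=
    isPreconnected_connectedComponentIn.subset_left_of_subset_union hU hV hUV
      ((connectedComponentIn_subset _ _).trans (union_subset_union hAU hBV))
      ⟨x, mem_connectedComponentIn (Or.inl hx), hAU hx⟩
  exact (connectedComponentIn_subset _ _ hy).resolve_right
    fun hyB => hUV.ne_of_mem (hsubU hy) (hBV hyB) rfl

lemma separatedNhds_preimage_singleton {X Y : Type*} [TopologicalSpace X] [TopologicalSpace Y]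
    [T2Space Y] {g : X → Y} (hg : Continuous g) {a b : Y} (hab : a ≠ b) :
    SeparatedNhds (g ⁻¹' {a}) (g ⁻¹' {b}) :=
  (SeparatedNhds.of_isCompact_isCompact isCompact_singleton isCompact_singleton
    (disjoint_singleton.2 hab)).preimage hg

section Lines

variable {R : Type*} [Zero R]

lemma range_mk_zero_mk (d : R) : range (fun z : R => ((0, d, z) : R × R × R)) =
    {q : R × R × R | q.1 = 0 ∧ q.2.1 = d} := by
  ext ⟨x, y, z⟩
  simp [eq_comm]

lemma isPreconnected_line [TopologicalSpace R] [PreconnectedSpace R] (d : R) :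
    IsPreconnected {q : R × R × R | q.1 = 0 ∧ q.2.1 = d} :=
  range_mk_zero_mk d ▸ isPreconnected_range (by fun_prop)

lemma connectedComponentIn_lines_eq [TopologicalSpace R] [PreconnectedSpace R] [T2Space R]
    {d d' : R} (hd : d ≠ d') {q : R × R × R}
    (hq : q ∈ {q : R × R × R | q.1 = 0 ∧ q.2.1 = d}) :
    connectedComponentIn ({q : R × R × R | q.1 = 0 ∧ q.2.1 = d} ∪
      {q : R × R × R | q.1 = 0 ∧ q.2.1 = d'}) q = {q : R × R × R | q.1 = 0 ∧ q.2.1 = d} :=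
  connectedComponentIn_union_eq_of_separatedNhds (isPreconnected_line d)
    ((separatedNhds_preimage_singleton (g := fun q : R × R × R => q.2.1) (by fun_prop) hd).mono
      (fun _ => And.right) (fun _ => And.right)) hq

end Lines

lemma setOf_sq_eq_union {K : Type*} [CommRing K] [NoZeroDivisors K] {c d : K} (hd : d ^ 2 = c) :
    {q : K × K × K | q.1 = 0 ∧ q.2.1 ^ 2 = c} =
      {q | q.1 = 0 ∧ q.2.1 = d} ∪ {q | q.1 = 0 ∧ q.2.1 = -d} := by
  ext q
  simp only [mem_ofPred_eq, mem_union, ← hd, sq_eq_sq_iff_eq_or_eq_neg, and_or_left]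

lemma preimage_mk_zero_eq (b : ℂ) :
    (fun q : ℂ × ℂ × ℂ => (q.1, ((q.1 - 1) * (q.1 * q.2.2 + q.2.1 ^ 2) + 1) *
      (q.1 * (q.1 * q.2.2 + q.2.1 ^ 2) - 1))) ⁻¹' {((0 : ℂ), b)} =
      {q : ℂ × ℂ × ℂ | q.1 = 0 ∧ q.2.1 ^ 2 = 1 + b} := by
  ext ⟨x, y, z⟩
  simp only [mem_preimage, mem_singleton_iff, Prod.mk.injEq, mem_ofPred_eq]
  constructor <;> rintro ⟨rfl, h⟩ <;> exact ⟨rfl, by linear_combination h⟩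

/-- For `F(x,y,z) = (x, [(x−1)(xz+y²)+1]·[x(xz+y²)−1])` and `b ≠ −1`,
the fibre `F⁻¹(0,b)` equals `{(0,d,z) : d² = 1+b}`, the union of the two disjoint
complex lines `{(0,dᵢ)} × ℂ` where `d₁ ≠ d₂` are the square roots of `1+b`; these are
its two connected components, each biholomorphic to `ℂ` via `z ↦ (0,dᵢ,z)`. -/
theorem statement13 (F : ℂ × ℂ × ℂ → ℂ × ℂ)
    (hF : F = fun q => (q.1, ((q.1 - 1) * (q.1 * q.2.2 + q.2.1 ^ 2) + 1) *
      (q.1 * (q.1 * q.2.2 + q.2.1 ^ 2) - 1))) :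
    ∀ b : ℂ, b ≠ -1 →
      F ⁻¹' {((0 : ℂ), b)} = {q : ℂ × ℂ × ℂ | q.1 = 0 ∧ q.2.1 ^ 2 = 1 + b} ∧
      ∃ d₁ d₂ : ℂ, d₁ ≠ d₂ ∧ d₁ ^ 2 = 1 + b ∧ d₂ ^ 2 = 1 + b ∧
        F ⁻¹' {((0 : ℂ), b)} =
          {q : ℂ × ℂ × ℂ | q.1 = 0 ∧ q.2.1 = d₁} ∪
          {q : ℂ × ℂ × ℂ | q.1 = 0 ∧ q.2.1 = d₂} ∧
        Disjoint {q : ℂ × ℂ × ℂ | q.1 = 0 ∧ q.2.1 = d₁}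
          {q : ℂ × ℂ × ℂ | q.1 = 0 ∧ q.2.1 = d₂} ∧
        ∀ d ∈ ({d₁, d₂} : Set ℂ),
          (∀ q ∈ {q : ℂ × ℂ × ℂ | q.1 = 0 ∧ q.2.1 = d},
            connectedComponentIn (F ⁻¹' {((0 : ℂ), b)}) q =
              {q : ℂ × ℂ × ℂ | q.1 = 0 ∧ q.2.1 = d}) ∧
          Differentiable ℂ (fun z : ℂ => ((0, d, z) : ℂ × ℂ × ℂ)) ∧
          Function.Injective (fun z : ℂ => ((0, d, z) : ℂ × ℂ × ℂ)) ∧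
          Set.range (fun z : ℂ => ((0, d, z) : ℂ × ℂ × ℂ)) =
            {q : ℂ × ℂ × ℂ | q.1 = 0 ∧ q.2.1 = d} ∧
          ∀ z : ℂ, (((0 : ℂ), d, z) : ℂ × ℂ × ℂ).2.2 = z := by
  intro b hb
  subst hF
  obtain ⟨d, hd⟩ := IsAlgClosed.exists_pow_nat_eq (1 + b) two_pos
  have hd₀ : d ≠ 0 := by
    rintro rfl
    exact hb (by linear_combination -hd)
  have hfib := preimage_mk_zero_eq b
  have hlines := hfib.trans (setOf_sq_eq_union hd)
  have hsep : d ≠ -d := fun h => hd₀ (CharZero.eq_neg_self_iff.1 h)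
  refine ⟨hfib, d, -d, hsep, hd, by rw [neg_sq, hd], hlines,
    disjoint_left.2 fun q hq hq' => hsep (hq.2.symm.trans hq'.2), ?_⟩
  rintro e (rfl | rfl) <;> refine ⟨fun q hq => ?_, by fun_prop,
    fun z w h => congrArg (·.2.2) h, range_mk_zero_mk _, fun _ => rfl⟩
  · rw [hlines]
    exact connectedComponentIn_lines_eq hsep hq
  · rw [hlines, union_comm]
    exact connectedComponentIn_lines_eq hsep.symm hq

end
end
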